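/- arXiv:math/0406544 — 4 statements merged into one kernel-verified Lean document; each statement's English description precedes it below -/
import Mathlib

section
/- Every class of representations axiomatizable by action-type first-order formulas (formulas built from atomic equalities w ≡ 0 using ∨, ∧, ¬ and quantifiers ∃x over module variables only) is saturated: a representation (V, G) belongs to the class if and only if the associated faithful representation (V, G/N) belongs to it, where N is the kernel of the action. -/
/-- Action-type first-order formulas over the free representation
`W = (X·K[F(Y)], F(Y))`: atoms are action equalities `w ≡ 0` with
`w` in the free `K[F(Y)]`-module on `X`, and the only quantifiers are
`∃x` over module variables `x ∈ X`. -/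
inductive AFormula (K X Y : Type) [CommRing K] : Type
  | eq : (X →₀ MonoidAlgebra K (FreeGroup Y)) → AFormula K X Y
  | or : AFormula K X Y → AFormula K X Y → AFormula K X Y
  | and : AFormula K X Y → AFormula K X Y → AFormula K X Y
  | not : AFormula K X Y → AFormula K X Y
  | ex : X → AFormula K X Y → AFormula K X Y

variable {K X Y G V : Type} [CommRing K] [Group G] [AddCommGroup V] [Module K V]

/-- Value of an element `w = Σ xᵢ·uᵢ` of the free `K[F(Y)]`-module under an
assignment `α : X → V` of module variables and `β : Y → G` of group variables,
in the representation `ρ`. -/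
noncomputable def evalW (ρ : Representation K G V) (α : X → V) (β : Y → G)
    (w : X →₀ MonoidAlgebra K (FreeGroup Y)) : V :=
  w.sum fun x u => Representation.asAlgebraHom (ρ.comp (FreeGroup.lift β)) u (α x)

/-- Satisfaction of an action-type formula in a representation `ρ` under a
valuation `(α, β)`. -/
def SatA [DecidableEq X] (ρ : Representation K G V) (α : X → V) (β : Y → G) :
    AFormula K X Y → Prop
  | .eq w => evalW ρ α β w = 0
  | .or u v => SatA ρ α β u ∨ SatA ρ α β v
  | .and u v => SatA ρ α β u ∧ SatA ρ α β v
  | .not u => ¬ SatA ρ α β u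
  | .ex x u => ∃ a : V, SatA ρ (Function.update α x a) β u

/-- An action-type formula holds in a representation if it is satisfied by
every valuation. -/
def HoldsA [DecidableEq X] (ρ : Representation K G V) (u : AFormula K X Y) : Prop :=
  ∀ (α : X → V) (β : Y → G), SatA ρ α β u

/-- The kernel of the action of `G` on `V`. -/
noncomputable def actionKer (ρ : Representation K G V) : Subgroup G :=
  ρ.asGroupHom.ker

instance (ρ : Representation K G V) : (actionKer ρ).Normal :=
  MonoidHom.normal_ker _

/-- The faithful representation `(V, G/N)` associated to `(V, G)`, where `N` is
the kernel of the action. -/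
noncomputable def faithfulQuot (ρ : Representation K G V) :
    Representation K (G ⧸ actionKer ρ) V :=
  (Units.coeHom (V →ₗ[K] V)).comp (QuotientGroup.kerLift ρ.asGroupHom)

lemma faithfulQuot_mk (ρ : Representation K G V) (g : G) :
    faithfulQuot ρ (QuotientGroup.mk g) = ρ g := by
  show (Units.coeHom (V →ₗ[K] V)) (QuotientGroup.kerLift ρ.asGroupHom (QuotientGroup.mk g)) = ρ g
  rw [QuotientGroup.kerLift_mk]
  exact Representation.asGroupHom_apply ρ g

lemma comp_lift_quot (ρ : Representation K G V) (β : Y → G) :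
    (faithfulQuot ρ).comp (FreeGroup.lift fun y => QuotientGroup.mk (β y))
      = ρ.comp (FreeGroup.lift β) := by
  have h : ((faithfulQuot ρ).comp (FreeGroup.lift fun y => QuotientGroup.mk (β y))).toHomUnits
      = (ρ.comp (FreeGroup.lift β)).toHomUnits := by
    apply FreeGroup.ext_hom
    intro y
    ext
    simp [faithfulQuot_mk]
  apply MonoidHom.ext
  intro w
  have h2 := congrArg Units.val (DFunLike.congr_fun h w)
  simpa [MonoidHom.coe_toHomUnits] using h2

lemma evalW_quot (ρ : Representation K G V) (α : X → V) (β : Y → G)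
    (w : X →₀ MonoidAlgebra K (FreeGroup Y)) :
    evalW (faithfulQuot ρ) α (fun y => QuotientGroup.mk (β y)) w = evalW ρ α β w := by
  unfold evalW
  rw [comp_lift_quot]

lemma satA_quot [DecidableEq X] (ρ : Representation K G V) (β : Y → G)
    (u : AFormula K X Y) : ∀ α : X → V,
    SatA (faithfulQuot ρ) α (fun y => QuotientGroup.mk (β y)) u ↔ SatA ρ α β u := by
  induction u with
  | eq w => intro α; simp [SatA, evalW_quot]
  | or u v ihu ihv => intro α; simp [SatA, ihu α, ihv α]
  | and u v ihu ihv => intro α; simp [SatA, ihu α, ihv α]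
  | not u ihu => intro α; simp [SatA, ihu α]
  | ex x u ihu => intro α; exact exists_congr fun a => ihu _

/-- Every class of representations axiomatizable by a set `T` of action-type
formulas is saturated: `(V, G)` satisfies `T` iff the associated faithful
representation `(V, G/N)` satisfies `T`. -/
theorem actionType_axiomatizable_saturated [DecidableEq X]
    (T : Set (AFormula K X Y)) (ρ : Representation K G V) :
    (∀ u ∈ T, HoldsA ρ u) ↔ (∀ u ∈ T, HoldsA (faithfulQuot ρ) u):= by
  constructor
  · intro h u hu α βq
    obtain ⟨β, hβ⟩ : ∃ β : Y → G, (fun y => (QuotientGroup.mk (β y) : G ⧸ actionKer ρ)) = βq :=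
      ⟨fun y => (βq y).out, funext fun y => QuotientGroup.out_eq' (βq y)⟩
    rw [← hβ]
    exact (satA_quot ρ β u α).2 (h u hu α β)
  · intro h u hu α β
    exact (satA_quot ρ β u α).1 (h u hu α fun y => QuotientGroup.mk (β y))
end

section
/- Every class of representations axiomatizable by action-type formulas is right-hereditary: if (V, G) belongs to the class and H is a subgroup of G, then (V, H) (with the restricted action) belongs to the class. More precisely, for any action-type formula u, Val_{(V,H)}(u) = Val_{(V,G)}(u) ∩ Hom(W, (V,H)). -/
variable {K X Y G V : Type} [CommRing K] [Group G] [AddCommGroup V] [Module K V]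

/-- Every action-type axiomatizable class is right-hereditary: for any
action-type formula, satisfaction in `(V, H)` is the restriction of
satisfaction in `(V, G)` (i.e. `Val_{(V,H)}(u) = Val_{(V,G)}(u) ∩ Hom(W,(V,H))`),
and hence if `(V, G)` satisfies a set `T` of action-type formulas then so does
`(V, H)` for every subgroup `H ≤ G`. -/
theorem actionType_axiomatizable_rightHereditary [DecidableEq X]
    (ρ : Representation K G V) (H : Subgroup G) :
    (∀ (u : AFormula K X Y) (α : X → V) (β : Y → H),
      SatA (ρ.comp H.subtype) α β u ↔ SatA ρ α (fun y => ((β y : H) : G)) u) ∧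
    (∀ T : Set (AFormula K X Y),
      (∀ u ∈ T, HoldsA ρ u) → ∀ u ∈ T, HoldsA (ρ.comp H.subtype) u) := by

  have key : ∀ (u : AFormula K X Y) (α : X → V) (β : Y → H),
      SatA (ρ.comp H.subtype) α β u ↔ SatA ρ α (fun y => ((β y : H) : G)) u := by
    intro u
    induction u with
    | eq w =>
      intro α β
      have h : (ρ.comp H.subtype).comp (FreeGroup.lift β)
          = ρ.comp (FreeGroup.lift (fun y => ((β y : H) : G))) := by
        rw [MonoidHom.comp_assoc]
        congr 1
        ext y
        simp
      simp only [SatA, evalW, h]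
    | or u v hu hv => intro α β; exact or_congr (hu α β) (hv α β)
    | and u v hu hv => intro α β; exact and_congr (hu α β) (hv α β)
    | not u hu => intro α β; exact not_congr (hu α β)
    | ex x u hu =>
      intro α β
      exact exists_congr fun a => hu (Function.update α x a) β
  refine ⟨key, fun T hT u hu α β => (key u α β).2 (hT u hu α _)⟩
end

section
/- Every class of representations axiomatizable by action-type formulas is right-local: if (V, G) is a representation such that (V, H) belongs to the class for every finitely generated subgroup H ≤ G, then (V, G) belongs to the class. -/
variable {K X Y G V : Type} [CommRing K] [Group G] [AddCommGroup V] [Module K V]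

namespace FreeGroup

variable [DecidableEq Y]

def vars (g : FreeGroup Y) : Finset Y :=
  (g.toWord.map Prod.fst).toFinset

theorem lift_eq_of_eqOn_vars {β β' : Y → G} {g : FreeGroup Y}
    (h : Set.EqOn β β' g.vars) : lift β g = lift β' g := by
  rw [← mk_toWord (x := g), lift_mk, lift_mk]
  refine congrArg List.prod (List.map_congr_left fun p hp => ?_)
  rw [h (List.mem_toFinset.2 (List.mem_map_of_mem hp))]

end FreeGroup

namespace AFormula

variable [DecidableEq Y]

noncomputable def words : AFormula K X Y → Finset (FreeGroup Y)
  | .eq w => w.support.biUnion fun x => (w x).coeff.support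
  | .or u v => u.words ∪ v.words
  | .and u v => u.words ∪ v.words
  | .not u => u.words
  | .ex _ u => u.words

noncomputable def vars (u : AFormula K X Y) : Finset Y :=
  u.words.biUnion FreeGroup.vars

end AFormula

section Congruence

variable {G' : Type} [Group G'] {ρ₁ : Representation K G V} {ρ₂ : Representation K G' V}
  {β₁ : Y → G} {β₂ : Y → G'}

theorem evalW_congr (α : X → V) (w : X →₀ MonoidAlgebra K (FreeGroup Y))
    (h : ∀ x ∈ w.support, ∀ g ∈ (w x).coeff.support,
      ρ₁ (FreeGroup.lift β₁ g) = ρ₂ (FreeGroup.lift β₂ g)) :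
    evalW ρ₁ α β₁ w = evalW ρ₂ α β₂ w := by
  refine Finsupp.sum_congr fun x hx => ?_
  simp only [Representation.asAlgebraHom_def, MonoidAlgebra.lift_apply]
  exact congrFun (congrArg DFunLike.coe (Finsupp.sum_congr fun g hg => by
    rw [MonoidHom.comp_apply, MonoidHom.comp_apply, h x hx g hg])) (α x)

theorem satA_congr [DecidableEq X] [DecidableEq Y] (u : AFormula K X Y)
    (h : ∀ g ∈ u.words, ρ₁ (FreeGroup.lift β₁ g) = ρ₂ (FreeGroup.lift β₂ g)) (α : X → V) :
    SatA ρ₁ α β₁ u ↔ SatA ρ₂ α β₂ u := by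
  induction u generalizing α with
  | eq w =>
    rw [SatA, SatA, evalW_congr α w fun x hx g hg => h g (Finset.mem_biUnion.2 ⟨x, hx, hg⟩)]
  | or u v hu hv =>
    exact or_congr (hu (fun g hg => h g (Finset.mem_union_left _ hg)) α)
      (hv (fun g hg => h g (Finset.mem_union_right _ hg)) α)
  | and u v hu hv =>
    exact and_congr (hu (fun g hg => h g (Finset.mem_union_left _ hg)) α)
      (hv (fun g hg => h g (Finset.mem_union_right _ hg)) α)
  | not u hu => exact not_congr (hu h α)
  | ex x u hu => exact exists_congr fun a => hu h _

end Congruence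

theorem Subgroup.exists_fg_factor_on_finset (β : Y → G) (S : Finset Y) :
    ∃ H : Subgroup G, H.FG ∧ ∃ β' : Y → H, Set.EqOn (fun y => (β' y : G)) β S := by
  classical
  let H := Subgroup.closure (S.image β : Set G)
  refine ⟨H, ⟨_, rfl⟩, fun y => if hy : β y ∈ H then ⟨β y, hy⟩ else 1, fun y hy => ?_⟩
  have hyH : β y ∈ H := Subgroup.subset_closure (Finset.mem_image_of_mem β hy)
  simp only [hyH, dif_pos]

/-- Every class of representations axiomatizable by action-type formulas is
right-local: if `(V, H)` satisfies the axioms `T` for every finitely generated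
subgroup `H ≤ G`, then `(V, G)` satisfies `T`. -/
theorem actionType_axiomatizable_rightLocal [DecidableEq X] [DecidableEq Y]
    (T : Set (AFormula K X Y)) (ρ : Representation K G V)
    (h : ∀ H : Subgroup G, H.FG → ∀ u ∈ T, HoldsA (ρ.comp H.subtype) u) :
    ∀ u ∈ T, HoldsA ρ u := by
  intro u hu α β
  obtain ⟨H, hH, β', hβ'⟩ := Subgroup.exists_fg_factor_on_finset β u.vars
  refine (satA_congr u (fun g hg => ?_) α).1 (h H hH u hu α β')
  have hlift : H.subtype (FreeGroup.lift β' g) = FreeGroup.lift β g :=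
    (FreeGroup.lift_unique (H.subtype.comp (FreeGroup.lift β')) fun y => by simp).trans
      (FreeGroup.lift_eq_of_eqOn_vars
        (hβ'.mono fun y hy => Finset.mem_biUnion.2 ⟨g, hg, hy⟩))
  exact congrArg ρ hlift
end

section
/- If an action-type formula u holds in (V, H) for every finitely generated subgroup H of G, then u holds in (V, G). (Key step: any valuation μ = (α, β) into (V,G) can be modified outside the finite Y-support of u to a valuation μ' whose group component has finitely generated image, without changing satisfaction of u.) -/
variable {K X Y G V : Type} [CommRing K] [Group G] [AddCommGroup V] [Module K V]

/-!
Satisfaction of `u` under a valuation `(α, β)` only depends on the values of `β` on the finitely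
many group variables occurring in `u`. Changing `β` to `1` elsewhere gives a valuation taking
values in the subgroup generated by those finitely many values, and satisfaction in `(V, G)` of a
valuation with values in a subgroup `H` is satisfaction in `(V, H)`.
-/

namespace FreeGroup

def letters [DecidableEq Y] (g : FreeGroup Y) : Finset Y :=
  (g.toWord.map Prod.fst).toFinset

theorem lift_eq_of_eqOn_letters [DecidableEq Y] {β β' : Y → G} (g : FreeGroup Y)
    (hβ : Set.EqOn β β' (letters g)) : lift β g = lift β' g := by
  rw [← mk_toWord (x := g), lift_mk, lift_mk]
  congr 1
  refine List.map_congr_left fun p hp => ?_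
  rw [hβ (List.mem_toFinset.mpr (List.mem_map_of_mem hp))]

end FreeGroup

noncomputable def wLetters [DecidableEq Y] (w : X →₀ MonoidAlgebra K (FreeGroup Y)) :
    Finset Y :=
  w.support.biUnion fun x => (w x).coeff.support.biUnion FreeGroup.letters

namespace AFormula

noncomputable def groupVars [DecidableEq Y] : AFormula K X Y → Finset Y
  | .eq w => wLetters w
  | .or u v => groupVars u ∪ groupVars v
  | .and u v => groupVars u ∪ groupVars v
  | .not u => groupVars u
  | .ex _ u => groupVars u

end AFormula

theorem evalW_congr_of_eqOn [DecidableEq Y] (ρ : Representation K G V) (α : X → V)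
    {β β' : Y → G} (w : X →₀ MonoidAlgebra K (FreeGroup Y))
    (hβ : Set.EqOn β β' (wLetters w)) : evalW ρ α β w = evalW ρ α β' w := by
  refine Finsupp.sum_congr fun x hx => ?_
  simp only [Representation.asAlgebraHom_def, MonoidAlgebra.lift_apply]
  refine congrArg (fun T : V →ₗ[K] V => T (α x)) (Finsupp.sum_congr fun g hg => ?_)
  have hg : FreeGroup.lift β g = FreeGroup.lift β' g :=
    FreeGroup.lift_eq_of_eqOn_letters g fun y hy => hβ <| by
      simp only [wLetters, Finset.coe_biUnion, Set.mem_iUnion]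
      exact ⟨x, hx, g, hg, hy⟩
  simp only [MonoidHom.comp_apply, hg]

theorem satA_congr_of_eqOn [DecidableEq X] [DecidableEq Y] (ρ : Representation K G V)
    {β β' : Y → G} (u : AFormula K X Y) (hβ : Set.EqOn β β' u.groupVars) (α : X → V) :
    SatA ρ α β u ↔ SatA ρ α β' u := by
  induction u generalizing α with
  | eq w => exact Eq.congr_left (evalW_congr_of_eqOn ρ α w hβ)
  | or u v ihu ihv =>
    exact or_congr (ihu (hβ.mono Finset.subset_union_left) α)
      (ihv (hβ.mono Finset.subset_union_right) α)
  | and u v ihu ihv =>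
    exact and_congr (ihu (hβ.mono Finset.subset_union_left) α)
      (ihv (hβ.mono Finset.subset_union_right) α)
  | not u ihu => exact not_congr (ihu hβ α)
  | ex x u ihu => exact exists_congr fun a => ihu hβ _

theorem evalW_comp {H : Type} [Group H] (ρ : Representation K G V) (f : H →* G) (α : X → V)
    (β : Y → H) (w : X →₀ MonoidAlgebra K (FreeGroup Y)) :
    evalW (ρ.comp f) α β w = evalW ρ α (f ∘ β) w := by
  have hlift : f.comp (FreeGroup.lift β) = FreeGroup.lift (f ∘ β) :=
    FreeGroup.ext_hom _ _ fun y => by simp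
  simp only [evalW, MonoidHom.comp_assoc, hlift]

theorem satA_comp_iff [DecidableEq X] {H : Type} [Group H] (ρ : Representation K G V)
    (f : H →* G) (β : Y → H) (u : AFormula K X Y) (α : X → V) :
    SatA (ρ.comp f) α β u ↔ SatA ρ α (f ∘ β) u := by
  induction u generalizing α with
  | eq w => exact Eq.congr_left (evalW_comp ρ f α β w)
  | or u v ihu ihv => exact or_congr (ihu α) (ihv α)
  | and u v ihu ihv => exact and_congr (ihu α) (ihv α)
  | not u ihu => exact not_congr (ihu α)
  | ex x u ihu => exact exists_congr fun a => ihu _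

theorem Subgroup.exists_fg_eqOn_comp_subtype (β : Y → G) (S : Finset Y) :
    ∃ H : Subgroup G, H.FG ∧ ∃ βH : Y → H, Set.EqOn (H.subtype ∘ βH) β S := by
  classical
  refine ⟨closure (S.image β), ⟨S.image β, rfl⟩, fun y => ?_, fun y hy => ?_⟩
  · exact if hy : y ∈ S then ⟨β y, subset_closure (Finset.mem_image_of_mem β hy)⟩ else 1
  · simp [Finset.mem_coe.mp hy]

/-- If an action-type formula `u` holds in `(V, H)` for every finitely
generated subgroup `H ≤ G`, then `u` holds in `(V, G)`. -/
theorem holds_of_holds_on_fg_subgroups [DecidableEq X] [DecidableEq Y]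
    (ρ : Representation K G V) (u : AFormula K X Y)
    (h : ∀ H : Subgroup G, H.FG → HoldsA (ρ.comp H.subtype) u) :
    HoldsA ρ u := by
  intro α β
  obtain ⟨H, hH, βH, hβ⟩ := Subgroup.exists_fg_eqOn_comp_subtype β u.groupVars
  rw [← satA_congr_of_eqOn ρ u hβ α, ← satA_comp_iff]
  exact h H hH α βH
end
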